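/- For every point t ∈ Ṙ = ℝ ∪ {∞}, every multiplicative linear functional in the fiber M_t(SO_t) admits a unique extension to a multiplicative linear functional in M_t(SO^◇); hence the fibers M_t(SO_t) and M_t(SO^◇) can be identified: M_t(SO_t) = M_t(SO^◇). -/

import Mathlib

open MeasureTheory Filter Topology Set

noncomputable section

/-- A Banach function norm on nonnegative measurable functions on ℝ (axioms (A1)–(A5)). -/
structure BFN where
  ρ : (ℝ → ENNReal) → ENNReal
  eq_zero_iff : ∀ f : ℝ → ENNReal, Measurable f → (ρ f = 0 ↔ f =ᵐ[volume] 0)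
  smul_eq : ∀ (c : ENNReal) (f : ℝ → ENNReal), Measurable f → ρ (fun x => c * f x) = c * ρ f
  add_le : ∀ f g : ℝ → ENNReal, Measurable f → Measurable g →
    ρ (fun x => f x + g x) ≤ ρ f + ρ g
  mono : ∀ f g : ℝ → ENNReal, Measurable f → Measurable g →
    (∀ᵐ x ∂volume, g x ≤ f x) → ρ g ≤ ρ f
  fatou : ∀ f : ℕ → ℝ → ENNReal, (∀ n, Measurable (f n)) →
    (∀ᵐ x ∂volume, Monotone fun n => f n x) →
    Tendsto (fun n => ρ (f n)) atTop (𝓝 (ρ fun x => ⨆ n, f n x))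
  indicator_lt_top : ∀ E : Set ℝ, MeasurableSet E → volume E < ⊤ → ρ (E.indicator 1) < ⊤
  loc_L1 : ∀ E : Set ℝ, MeasurableSet E → volume E < ⊤ →
    ∃ C : ENNReal, C ≠ 0 ∧ C ≠ ⊤ ∧ ∀ f : ℝ → ENNReal, Measurable f →
      (∫⁻ x in E, f x) ≤ C * ρ f

namespace BFN

variable (N : BFN)

/-- The (extended) norm of a complex-valued function in the Banach function space. -/
def norm' (f : ℝ → ℂ) : ENNReal := N.ρ fun x => (‖f x‖₊ : ENNReal)

/-- Membership in the Banach function space X(ℝ). -/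
def Mem (f : ℝ → ℂ) : Prop := AEMeasurable f volume ∧ N.norm' f < ⊤

/-- A set of functions is dense in X(ℝ). -/
def DenseIn (S : Set (ℝ → ℂ)) : Prop :=
  ∀ f, N.Mem f → ∀ ε : ℝ, 0 < ε → ∃ g ∈ S, N.norm' (fun x => f x - g x) < ENNReal.ofReal ε

/-- Separability of X(ℝ). -/
def Separable : Prop :=
  ∃ D : Set (ℝ → ℂ), D.Countable ∧ (∀ g ∈ D, N.Mem g) ∧ N.DenseIn D

/-- The associate (Köthe dual) norm ρ'. -/
def assoc : (ℝ → ENNReal) → ENNReal := fun g =>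
  ⨆ f : {f : ℝ → ENNReal // Measurable f ∧ N.ρ f ≤ 1}, ∫⁻ x, f.1 x * g x

end BFN

/-- The non-centered Hardy–Littlewood maximal function (of a nonnegative function). -/
def maximalFn (g : ℝ → ENNReal) (x : ℝ) : ENNReal :=
  ⨆ (a : ℝ) (b : ℝ) (_ : a < b) (_ : x ∈ Set.Icc a b),
    (ENNReal.ofReal (b - a))⁻¹ * ∫⁻ y in Set.Icc a b, g y

/-- Boundedness of the Hardy–Littlewood maximal operator with respect to a function norm. -/
def MaximalBounded (ρ : (ℝ → ENNReal) → ENNReal) : Prop :=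
  ∃ C : ENNReal, C ≠ ⊤ ∧ ∀ g : ℝ → ENNReal, Measurable g → ρ (maximalFn g) ≤ C * ρ g

/-- The standing hypotheses: X(ℝ) separable, M bounded on X(ℝ) and on X'(ℝ). -/
def GoodBFN (N : BFN) : Prop := N.Separable ∧ MaximalBounded N.ρ ∧ MaximalBounded N.assoc

/-- The Fourier convolution operator W⁰(b) = F⁻¹ b F, on nice functions. -/
def W0 (b f : ℝ → ℂ) : ℝ → ℂ :=
  FourierTransformInv.fourierInv (fun x => b x * FourierTransform.fourier f x)

/-- A bounded linear operator on X(ℝ) (linearity up to null functions). -/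
structure OpOn (N : BFN) where
  toFun : (ℝ → ℂ) → (ℝ → ℂ)
  maps_mem : ∀ f, N.Mem f → N.Mem (toFun f)
  map_add_ae : ∀ f g, N.Mem f → N.Mem g →
    N.norm' (fun x => toFun (fun y => f y + g y) x - (toFun f x + toFun g x)) = 0
  map_smul_ae : ∀ (c : ℂ) (f), N.Mem f →
    N.norm' (fun x => toFun (fun y => c * f y) x - c * toFun f x) = 0
  bounded : ∃ C : ENNReal, C ≠ ⊤ ∧ ∀ f, N.Mem f → N.norm' (toFun f) ≤ C * N.norm' f

/-- `T` has operator norm at most `C` on X(ℝ). -/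
def OpNormLe (N : BFN) (T : OpOn N) (C : ENNReal) : Prop :=
  ∀ f, N.Mem f → N.norm' (T.toFun f) ≤ C * N.norm' f

/-- `T` is (an extension of) the Fourier convolution operator with symbol `b`:
it agrees a.e. with `W⁰(b)` on `L¹ ∩ L² ∩ X`. -/
def IsMultiplierOp (N : BFN) (b : ℝ → ℂ) (T : OpOn N) : Prop :=
  ∀ f : ℝ → ℂ, Integrable f volume → MemLp f 2 volume → N.Mem f →
    N.norm' (fun x => T.toFun f x - W0 b f x) = 0

/-- `b` is a Fourier multiplier on X(ℝ). -/
def IsMultiplier (N : BFN) (b : ℝ → ℂ) : Prop :=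
  MemLp b ⊤ volume ∧ ∃ T : OpOn N, IsMultiplierOp N b T

/-- The multiplier norm ‖b‖_{M_X} = ‖W⁰(b)‖_{B(X)}. -/
def mNorm (N : BFN) (b : ℝ → ℂ) : ENNReal :=
  sInf {C | ∃ T : OpOn N, IsMultiplierOp N b T ∧ OpNormLe N T C}

/-- A map of functions is a compact operator on X(ℝ): it maps X to X and the image of the
unit ball is totally bounded. -/
def CompactMap (N : BFN) (T : (ℝ → ℂ) → (ℝ → ℂ)) : Prop :=
  (∀ f, N.Mem f → N.Mem (T f)) ∧
  ∀ ε : ℝ, 0 < ε → ∃ S : Set (ℝ → ℂ), S.Finite ∧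
    ∀ f, N.Mem f → N.norm' f ≤ 1 → ∃ g ∈ S, N.norm' (fun x => T f x - g x) < ENNReal.ofReal ε

/-- A bounded linear operator on X(ℝ) is compact. -/
def IsCompactOp (N : BFN) (K : OpOn N) : Prop := CompactMap N K.toFun

/-- The oscillation of `f` over a set `E`. -/
def osc (f : ℝ → ℂ) (E : Set ℝ) : ENNReal :=
  ⨆ s ∈ E, ⨆ t ∈ E, (‖f s - f t‖₊ : ENNReal)

/-- `f` slowly oscillates at a finite point `lam`. -/
def SlowOscAt (f : ℝ → ℂ) (lam : ℝ) : Prop :=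
  ∀ r : ℝ, 0 < r → r < 1 → ∀ ε : ℝ, 0 < ε → ∃ δ : ℝ, 0 < δ ∧ ∀ x : ℝ, 0 < x → x < δ →
    osc f (Set.Icc (lam - x) (lam - r * x) ∪ Set.Icc (lam + r * x) (lam + x)) <
      ENNReal.ofReal ε

/-- `f` slowly oscillates at ∞. -/
def SlowOscAtInf (f : ℝ → ℂ) : Prop :=
  ∀ r : ℝ, 0 < r → r < 1 → ∀ ε : ℝ, 0 < ε → ∃ R : ℝ, 0 < R ∧ ∀ x : ℝ, R < x →
    osc f (Set.Icc (-x) (-(r * x)) ∪ Set.Icc (r * x) x) < ENNReal.ofReal ε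

/-- Boundedness of a function. -/
def Bdd (f : ℝ → ℂ) : Prop := ∃ M : ℝ, ∀ x, ‖f x‖ ≤ M

/-- The algebra SO_t, for t ∈ Ṙ = ℝ ∪ {∞} (encoded as `Option ℝ`, `none` = ∞):
bounded functions, continuous on Ṙ \ {t}, slowly oscillating at t. -/
def SO : Option ℝ → (ℝ → ℂ) → Prop
  | some lam, f => Bdd f ∧ ContinuousOn f {lam}ᶜ ∧
      (∃ L : ℂ, Tendsto f (cocompact ℝ) (𝓝 L)) ∧ SlowOscAt f lam
  | none, f => Bdd f ∧ Continuous f ∧ SlowOscAtInf f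

/-- The operator D_λ a (x) = (x − λ) a'(x). -/
def Dop (lam : ℝ) (a : ℝ → ℂ) : ℝ → ℂ := fun x => ((x : ℂ) - (lam : ℂ)) * deriv a x

/-- The operator D_∞ a (x) = x a'(x). -/
def DopInf (a : ℝ → ℂ) : ℝ → ℂ := fun x => (x : ℂ) * deriv a x

/-- The algebra SO_t^3 of C³ slowly oscillating functions with
lim_{x→t} (D_t^k a)(x) = 0 for k = 1,2,3. -/
def SO3 : Option ℝ → (ℝ → ℂ) → Prop
  | some lam, a => SO (some lam) a ∧ ContDiffOn ℝ 3 a {lam}ᶜ ∧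
      ∀ k : ℕ, 1 ≤ k → k ≤ 3 → Tendsto ((Dop lam)^[k] a) (𝓝[≠] lam) (𝓝 0)
  | none, a => SO none a ∧ ContDiff ℝ 3 a ∧
      ∀ k : ℕ, 1 ≤ k → k ≤ 3 → Tendsto (DopInf^[k] a) (cocompact ℝ) (𝓝 0)

/-- SO_{t,X(ℝ)}: the closure of SO_t^3 in the multiplier norm of X(ℝ). -/
def SOX (N : BFN) (t : Option ℝ) (b : ℝ → ℂ) : Prop :=
  IsMultiplier N b ∧ ∀ ε : ℝ, 0 < ε → ∃ a, SO3 t a ∧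
    IsMultiplier N (fun x => b x - a x) ∧
    mNorm N (fun x => b x - a x) < ENNReal.ofReal ε

/-- The *-algebra generated by all the SO_t, t ∈ Ṙ. -/
inductive SOgen : (ℝ → ℂ) → Prop
  | base (t : Option ℝ) (f : ℝ → ℂ) : SO t f → SOgen f
  | add {f g : ℝ → ℂ} : SOgen f → SOgen g → SOgen (fun x => f x + g x)
  | mul {f g : ℝ → ℂ} : SOgen f → SOgen g → SOgen (fun x => f x * g x)
  | smul (c : ℂ) {f : ℝ → ℂ} : SOgen f → SOgen (fun x => c * f x)
  | star {f : ℝ → ℂ} : SOgen f → SOgen (fun x => starRingEnd ℂ (f x))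

/-- SO^◇: the smallest C*-subalgebra of L^∞(ℝ) containing all SO_t. -/
def SOdiamond (f : ℝ → ℂ) : Prop :=
  MemLp f ⊤ volume ∧ ∀ ε : ℝ, 0 < ε → ∃ g, SOgen g ∧
    eLpNorm (fun x => f x - g x) ⊤ volume < ENNReal.ofReal ε

/-- The algebra generated by all the SO_{t,X(ℝ)}, t ∈ Ṙ. -/
inductive SOXgen (N : BFN) : (ℝ → ℂ) → Prop
  | base (t : Option ℝ) (f : ℝ → ℂ) : SOX N t f → SOXgen N f
  | add {f g : ℝ → ℂ} : SOXgen N f → SOXgen N g → SOXgen N (fun x => f x + g x)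
  | mul {f g : ℝ → ℂ} : SOXgen N f → SOXgen N g → SOXgen N (fun x => f x * g x)
  | smul (c : ℂ) {f : ℝ → ℂ} : SOXgen N f → SOXgen N (fun x => c * f x)

/-- SO_{X(ℝ)}^◇: the smallest Banach subalgebra of M_{X(ℝ)} containing all SO_{t,X(ℝ)}. -/
def SOXdiamond (N : BFN) (b : ℝ → ℂ) : Prop :=
  IsMultiplier N b ∧ ∀ ε : ℝ, 0 < ε → ∃ g, SOXgen N g ∧
    IsMultiplier N (fun x => b x - g x) ∧
    mNorm N (fun x => b x - g x) < ENNReal.ofReal ε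

/-- A multiplicative linear functional (character) on a set `S` of functions
(which respects a.e. equality, as elements of function algebras are a.e.-classes). -/
structure CharOn (S : Set (ℝ → ℂ)) where
  φ : (ℝ → ℂ) → ℂ
  map_ae : ∀ f g : ℝ → ℂ, f ∈ S → g ∈ S → f =ᵐ[volume] g → φ f = φ g
  map_add : ∀ f ∈ S, ∀ g ∈ S, φ (fun x => f x + g x) = φ f + φ g
  map_mul : ∀ f ∈ S, ∀ g ∈ S, φ (fun x => f x * g x) = φ f * φ g
  map_smul : ∀ (c : ℂ), ∀ f ∈ S, φ (fun x => c * f x) = c * φ f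
  map_one : φ (fun _ => 1) = 1

/-- The algebra C(Ṙ): continuous functions on ℝ having a limit at ∞. -/
def CRdot (f : ℝ → ℂ) : Prop := Continuous f ∧ ∃ L : ℂ, Tendsto f (cocompact ℝ) (𝓝 L)

/-- The character `χ` on `S` lies in the fiber over `t ∈ Ṙ`: its restriction to C(Ṙ)
is the evaluation at `t`. -/
def InFiber (S : Set (ℝ → ℂ)) (χ : CharOn S) : Option ℝ → Prop
  | some lam => ∀ f, f ∈ S → CRdot f → χ.φ f = f lam
  | none => ∀ f, f ∈ S → CRdot f → ∀ L : ℂ, Tendsto f (cocompact ℝ) (𝓝 L) → χ.φ f = L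

/-- The spectrum of `f` in the function algebra `S` (invertibility understood a.e.). -/
def specIn (S : Set (ℝ → ℂ)) (f : ℝ → ℂ) : Set ℂ :=
  {z | ¬ ∃ g ∈ S, (fun x => (f x - z) * g x) =ᵐ[volume] (fun _ => (1 : ℂ))}

/-- Positivity of an element of the function algebra `S`: self-adjoint with
spectrum contained in [0, ∞). -/
def IsPositiveIn (S : Set (ℝ → ℂ)) (f : ℝ → ℂ) : Prop :=
  (∀ x, (f x).im = 0) ∧ specIn S f ⊆ {z : ℂ | 0 ≤ z.re ∧ z.im = 0}

/-- A character on a set `S` of operators which factors through the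
compact-equivalence relation `R` (i.e. a character of the Calkin image). -/
structure CharOnOps (S : Set ((ℝ → ℂ) → (ℝ → ℂ)))
    (R : ((ℝ → ℂ) → (ℝ → ℂ)) → ((ℝ → ℂ) → (ℝ → ℂ)) → Prop) where
  φ : ((ℝ → ℂ) → (ℝ → ℂ)) → ℂ
  map_add : ∀ T ∈ S, ∀ U ∈ S, φ (fun f x => T f x + U f x) = φ T + φ U
  map_mul : ∀ T ∈ S, ∀ U ∈ S, φ (fun f => T (U f)) = φ T * φ U
  map_smul : ∀ (c : ℂ), ∀ T ∈ S, φ (fun f x => c * T f x) = c * φ T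
  congr : ∀ T ∈ S, ∀ U ∈ S, R T U → φ T = φ U


/-!
A character `χ` in the fiber over `t` is local at `t`. Both `SO_t` and `SO^◇` are inverse-closed
in `L^∞`, so `|χ b| ≤ ‖b‖_∞`; multiplying `b` by a cutoff `h ∈ C(Ṙ)` with `h(t) = 1` supported
near `t` leaves `χ b` unchanged, hence `|χ b|` is bounded by the essential supremum of `b` near `t`.
On the other hand every generator of `SO^◇` from `SO_s`, `s ≠ t`, is continuous at `t`, so every
element of `SO^◇` is, near `t`, a uniform limit of elements of `SO_t`. Thus `η` extends by
continuity for the local seminorm, and any extension in the fiber must be this one.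
-/

lemma norm_mul_sub_mul_le (x y a b : ℂ) : ‖x * y - a * b‖ ≤ ‖x‖ * ‖y - b‖ + ‖x - a‖ * ‖b‖ := by
  calc ‖x * y - a * b‖ = ‖x * (y - b) + (x - a) * b‖ := by ring_nf
    _ ≤ ‖x‖ * ‖y - b‖ + ‖x - a‖ * ‖b‖ := by
      simpa only [norm_mul] using norm_add_le (x * (y - b)) ((x - a) * b)

lemma norm_inv_sub_inv_le {a b : ℂ} {d : ℝ} (hd : 0 < d) (ha : d ≤ ‖a‖) (hb : d ≤ ‖b‖) :
    ‖a⁻¹ - b⁻¹‖ ≤ (d * d)⁻¹ * ‖a - b‖ := by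
  have ha0 : a ≠ 0 := norm_pos_iff.1 (hd.trans_le ha)
  have hb0 : b ≠ 0 := norm_pos_iff.1 (hd.trans_le hb)
  rw [inv_sub_inv ha0 hb0, norm_div, norm_mul, norm_sub_rev, inv_mul_eq_div]
  exact div_le_div_of_nonneg_left (norm_nonneg _) (by positivity)
    (mul_le_mul ha hb hd.le (norm_nonneg _))

lemma eventually_cocompact_iff_abs {p : ℝ → Prop} :
    (∀ᶠ x in cocompact ℝ, p x) ↔ ∃ R, ∀ x, R < |x| → p x := by
  rw [← Metric.cobounded_eq_cocompact, ← comap_norm_atTop,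
    (atTop_basis_Ioi.comap _).eventually_iff]
  simp

lemma abs_sub_mem_of_mem_oscSet {lam r x s : ℝ} (hrx : 0 ≤ r * x)
    (hs : s ∈ Icc (lam - x) (lam - r * x) ∪ Icc (lam + r * x) (lam + x)) :
    |s - lam| ∈ Icc (r * x) x := by
  rcases hs with ⟨h₁, h₂⟩ | ⟨h₁, h₂⟩
  · rw [abs_of_nonpos (by linarith)]; exact ⟨by linarith, by linarith⟩
  · rw [abs_of_nonneg (by linarith)]; exact ⟨by linarith, by linarith⟩

lemma le_abs_of_mem_oscSetInf {r x s : ℝ} (hrx : 0 ≤ r * x)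
    (hs : s ∈ Icc (-x) (-(r * x)) ∪ Icc (r * x) x) : r * x ≤ |s| := by
  simpa using (abs_sub_mem_of_mem_oscSet (lam := 0) hrx (by simpa using hs)).1

section Oscillation

variable {f g h : ℝ → ℂ} {E : Set ℝ}

lemma ofReal_norm_sub_le_osc {s u : ℝ} (hs : s ∈ E) (hu : u ∈ E) :
    ENNReal.ofReal ‖f s - f u‖ ≤ osc f E := by
  rw [ofReal_norm, enorm_eq_nnnorm]
  exact le_iSup₂_of_le s hs (le_iSup₂_of_le u hu le_rfl)

lemma osc_le_ofReal {c : ℝ} (H : ∀ s ∈ E, ∀ u ∈ E, ‖f s - f u‖ ≤ c) :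
    osc f E ≤ ENNReal.ofReal c :=
  iSup₂_le fun s hs => iSup₂_le fun u hu => by
    rw [← enorm_eq_nnnorm, ← ofReal_norm]
    exact ENNReal.ofReal_le_ofReal (H s hs u hu)

lemma norm_sub_lt_of_osc_lt {ε : ℝ} (hf : osc f E < ENNReal.ofReal ε) {s u : ℝ} (hs : s ∈ E)
    (hu : u ∈ E) : ‖f s - f u‖ < ε :=
  (ENNReal.ofReal_lt_ofReal_iff_of_nonneg (norm_nonneg _)).1
    ((ofReal_norm_sub_le_osc hs hu).trans_lt hf)

lemma osc_lt_of_forall_dist_le {L : ℂ} {ε : ℝ} (hε : 0 < ε)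
    (H : ∀ s ∈ E, dist (f s) L ≤ ε / 3) : osc f E < ENNReal.ofReal ε := by
  refine (osc_le_ofReal (c := 2 * ε / 3) fun s hs u hu => ?_).trans_lt
    ((ENNReal.ofReal_lt_ofReal_iff hε).2 (by linarith))
  rw [← dist_eq_norm]
  linarith [dist_triangle_right (f s) (f u) L, H s hs, H u hu]

lemma osc_lt_of_norm_sub_le {A ε : ℝ} (hA : 0 ≤ A) (hε : 0 < ε)
    (H : ∀ s ∈ E, ∀ u ∈ E, ‖h s - h u‖ ≤ A * (‖f s - f u‖ + ‖g s - g u‖))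
    (hf : osc f E < ENNReal.ofReal (ε / (2 * (A + 1))))
    (hg : osc g E < ENNReal.ofReal (ε / (2 * (A + 1)))) : osc h E < ENNReal.ofReal ε := by
  have hδ : A * (ε / (2 * (A + 1)) + ε / (2 * (A + 1))) < ε := by
    have : A * (ε / (2 * (A + 1)) + ε / (2 * (A + 1))) = ε * (A / (A + 1)) := by
      field_simp; ring
    rw [this]
    exact mul_lt_of_lt_one_right hε ((div_lt_one (by positivity)).2 (by linarith))
  refine (osc_le_ofReal fun s hs u hu => ?_).trans_lt ((ENNReal.ofReal_lt_ofReal_iff hε).2 hδ)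
  exact (H s hs u hu).trans (mul_le_mul_of_nonneg_left (add_le_add
    (norm_sub_lt_of_osc_lt hf hs hu).le (norm_sub_lt_of_osc_lt hg hs hu).le) hA)

lemma SlowOscAt.of_norm_sub_le {lam A : ℝ} (hf : SlowOscAt f lam) (hg : SlowOscAt g lam)
    (hA : 0 ≤ A)
    (H : ∀ s u, s ≠ lam → u ≠ lam → ‖h s - h u‖ ≤ A * (‖f s - f u‖ + ‖g s - g u‖)) :
    SlowOscAt h lam := by
  intro r hr hr1 ε hε
  obtain ⟨δ₁, hδ₁, H₁⟩ := hf r hr hr1 (ε / (2 * (A + 1))) (by positivity)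
  obtain ⟨δ₂, hδ₂, H₂⟩ := hg r hr hr1 (ε / (2 * (A + 1))) (by positivity)
  refine ⟨min δ₁ δ₂, lt_min hδ₁ hδ₂, fun x hx hxδ => osc_lt_of_norm_sub_le hA hε ?_
    (H₁ x hx (hxδ.trans_le (min_le_left _ _))) (H₂ x hx (hxδ.trans_le (min_le_right _ _)))⟩
  have hne : ∀ s ∈ Icc (lam - x) (lam - r * x) ∪ Icc (lam + r * x) (lam + x), s ≠ lam :=
    fun s hs => sub_ne_zero.1 <| abs_pos.1 <|
      (mul_pos hr hx).trans_le (abs_sub_mem_of_mem_oscSet (mul_pos hr hx).le hs).1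
  exact fun s hs u hu => H s u (hne s hs) (hne u hu)

lemma SlowOscAtInf.of_norm_sub_le {A : ℝ} (hf : SlowOscAtInf f) (hg : SlowOscAtInf g)
    (hA : 0 ≤ A) (H : ∀ s u, ‖h s - h u‖ ≤ A * (‖f s - f u‖ + ‖g s - g u‖)) :
    SlowOscAtInf h := by
  intro r hr hr1 ε hε
  obtain ⟨R₁, hR₁, H₁⟩ := hf r hr hr1 (ε / (2 * (A + 1))) (by positivity)
  obtain ⟨R₂, -, H₂⟩ := hg r hr hr1 (ε / (2 * (A + 1))) (by positivity)
  exact ⟨max R₁ R₂, lt_max_of_lt_left hR₁, fun x hx => osc_lt_of_norm_sub_le hA hε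
    (fun s _ u _ => H s u) (H₁ x ((le_max_left _ _).trans_lt hx))
    (H₂ x ((le_max_right _ _).trans_lt hx))⟩

lemma SlowOscAt.of_continuousAt {lam : ℝ} (hf : ContinuousAt f lam) : SlowOscAt f lam := by
  intro r hr _ ε hε
  obtain ⟨δ, hδ, hf⟩ := Metric.continuousAt_iff.1 hf (ε / 3) (by positivity)
  refine ⟨δ, hδ, fun x hx hxδ => osc_lt_of_forall_dist_le hε fun s hs => (hf ?_).le⟩
  rw [Real.dist_eq]
  exact (abs_sub_mem_of_mem_oscSet (by positivity) hs).2.trans_lt hxδ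

lemma SlowOscAtInf.of_tendsto {L : ℂ} (hf : Tendsto f (cocompact ℝ) (𝓝 L)) :
    SlowOscAtInf f := by
  intro r hr _ ε hε
  obtain ⟨R, hR⟩ := eventually_cocompact_iff_abs.1
    (hf.eventually (Metric.closedBall_mem_nhds L (by positivity : 0 < ε / 3)))
  refine ⟨|R| / r + 1, by positivity, fun x hx =>
    osc_lt_of_forall_dist_le (L := L) hε fun s hs => hR s ?_⟩
  have hrx : |R| < r * x := (div_lt_iff₀' hr).1 (by linarith)
  exact (le_abs_self R).trans_lt
    (hrx.trans_le (le_abs_of_mem_oscSetInf ((abs_nonneg R).trans hrx.le) hs))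

end Oscillation

lemma Bdd.add {f g : ℝ → ℂ} (hf : Bdd f) (hg : Bdd g) : Bdd fun x => f x + g x :=
  let ⟨M, hM⟩ := hf
  let ⟨N, hN⟩ := hg
  ⟨M + N, fun x => (norm_add_le _ _).trans (add_le_add (hM x) (hN x))⟩

lemma Bdd.mul {f g : ℝ → ℂ} (hf : Bdd f) (hg : Bdd g) : Bdd fun x => f x * g x :=
  let ⟨M, hM⟩ := hf
  let ⟨N, hN⟩ := hg
  ⟨M * N, fun x => (norm_mul_le _ _).trans
    (mul_le_mul (hM x) (hN x) (norm_nonneg _) ((norm_nonneg _).trans (hM x)))⟩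

lemma CRdot.bdd {f : ℝ → ℂ} (hf : CRdot f) : Bdd f := by
  obtain ⟨hc, L, hL⟩ := hf
  obtain ⟨K, hK, hKf⟩ := mem_cocompact.1
    (hL.norm.eventually (gt_mem_nhds (lt_add_one ‖L‖)))
  obtain ⟨C, hC⟩ := hK.exists_bound_of_continuousOn hc.continuousOn
  refine ⟨max C (‖L‖ + 1), fun x => ?_⟩
  by_cases hx : x ∈ K
  · exact (hC x hx).trans (le_max_left _ _)
  · exact (hKf hx).le.trans (le_max_right _ _)

namespace SO

variable {t : Option ℝ} {f g : ℝ → ℂ}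

lemma bdd (hf : SO t f) : Bdd f := by
  cases t <;> exact hf.1

lemma continuousAt (hf : SO t f) {x : ℝ} (hx : some x ≠ t) : ContinuousAt f x := by
  cases t with
  | some lam => exact hf.2.1.continuousAt (isOpen_compl_singleton.mem_nhds fun h => hx (h ▸ rfl))
  | none => exact hf.2.1.continuousAt

lemma norm_le_of_ae {M : ℝ} (hf : SO t f) (hM : ∀ᵐ x, ‖f x‖ ≤ M) {x : ℝ} (hx : some x ≠ t) :
    ‖f x‖ ≤ M := by
  have : (𝓝[{y | ‖f y‖ ≤ M}] x).NeBot :=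
    mem_closure_iff_nhdsWithin_neBot.1 (Measure.dense_of_ae hM x)
  exact le_of_tendsto
    ((hf.continuousAt hx).norm.mono_left (nhdsWithin_le_nhds (s := {y | ‖f y‖ ≤ M})))
    (eventually_mem_nhdsWithin.mono fun _ hy => hy)

lemma aestronglyMeasurable (hf : SO t f) : AEStronglyMeasurable f volume := by
  cases t with
  | some lam =>
    simpa only [restrict_compl_singleton] using
      hf.2.1.aestronglyMeasurable (μ := volume) (measurableSet_singleton lam).compl
  | none => exact hf.2.1.aestronglyMeasurable

lemma _root_.CRdot.so (hf : CRdot f) (t : Option ℝ) : SO t f := by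
  cases t with
  | some lam => exact ⟨hf.bdd, hf.1.continuousOn, hf.2, .of_continuousAt hf.1.continuousAt⟩
  | none => exact ⟨hf.bdd, hf.1, .of_tendsto hf.2.choose_spec⟩

lemma const (t : Option ℝ) (c : ℂ) : SO t fun _ => c :=
  CRdot.so ⟨continuous_const, c, tendsto_const_nhds⟩ t

lemma add (hf : SO t f) (hg : SO t g) : SO t fun x => f x + g x := by
  have H : ∀ s u, ‖(f s + g s) - (f u + g u)‖ ≤ 1 * (‖f s - f u‖ + ‖g s - g u‖) :=
    fun s u => by rw [one_mul, add_sub_add_comm]; exact norm_add_le _ _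
  have hbdd := hf.bdd.add hg.bdd
  cases t with
  | some lam =>
    obtain ⟨-, hfc, ⟨Lf, hLf⟩, hfo⟩ := hf
    obtain ⟨-, hgc, ⟨Lg, hLg⟩, hgo⟩ := hg
    exact ⟨hbdd, hfc.add hgc, ⟨_, hLf.add hLg⟩, hfo.of_norm_sub_le hgo zero_le_one
      fun s u _ _ => H s u⟩
  | none =>
    obtain ⟨-, hfc, hfo⟩ := hf
    obtain ⟨-, hgc, hgo⟩ := hg
    exact ⟨hbdd, hfc.add hgc, hfo.of_norm_sub_le hgo zero_le_one H⟩

lemma mul (hf : SO t f) (hg : SO t g) : SO t fun x => f x * g x := by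
  obtain ⟨M, hM⟩ := hf.bdd
  obtain ⟨N, hN⟩ := hg.bdd
  have hM0 : 0 ≤ M := (norm_nonneg _).trans (hM 0)
  have hN0 : 0 ≤ N := (norm_nonneg _).trans (hN 0)
  have H : ∀ s u, ‖f s * g s - f u * g u‖ ≤ (M + N) * (‖f s - f u‖ + ‖g s - g u‖) := by
    intro s u
    refine (norm_mul_sub_mul_le _ _ _ _).trans ?_
    nlinarith [hM s, hN u, norm_nonneg (f s - f u), norm_nonneg (g s - g u),
      mul_le_mul_of_nonneg_right (hM s) (norm_nonneg (g s - g u)),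
      mul_le_mul_of_nonneg_left (hN u) (norm_nonneg (f s - f u))]
  have hbdd := hf.bdd.mul hg.bdd
  cases t with
  | some lam =>
    obtain ⟨-, hfc, ⟨Lf, hLf⟩, hfo⟩ := hf
    obtain ⟨-, hgc, ⟨Lg, hLg⟩, hgo⟩ := hg
    exact ⟨hbdd, hfc.mul hgc, ⟨_, hLf.mul hLg⟩, hfo.of_norm_sub_le hgo (by positivity)
      fun s u _ _ => H s u⟩
  | none =>
    obtain ⟨-, hfc, hfo⟩ := hf
    obtain ⟨-, hgc, hgo⟩ := hg
    exact ⟨hbdd, hfc.mul hgc, hfo.of_norm_sub_le hgo (by positivity) H⟩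

lemma conj (hf : SO t f) : SO t fun x => starRingEnd ℂ (f x) := by
  have H : ∀ s u, ‖starRingEnd ℂ (f s) - starRingEnd ℂ (f u)‖ ≤
      1 * (‖f s - f u‖ + ‖f s - f u‖) := fun s u => by
    rw [← map_sub, Complex.norm_conj]; linarith [norm_nonneg (f s - f u)]
  obtain ⟨M, hM⟩ := hf.bdd
  have hbdd : Bdd fun x => starRingEnd ℂ (f x) := ⟨M, fun x => by simpa using hM x⟩
  cases t with
  | some lam =>
    obtain ⟨-, hfc, ⟨L, hL⟩, hfo⟩ := hf
    exact ⟨hbdd, Complex.continuous_conj.comp_continuousOn hfc,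
      ⟨_, (Complex.continuous_conj.tendsto L).comp hL⟩,
      hfo.of_norm_sub_le hfo zero_le_one fun s u _ _ => H s u⟩
  | none =>
    obtain ⟨-, hfc, hfo⟩ := hf
    exact ⟨hbdd, Complex.continuous_conj.comp hfc, hfo.of_norm_sub_le hfo zero_le_one H⟩

lemma inv_sub {M : ℝ} {z : ℂ} (hf : SO t f) (hM : ∀ᵐ x, ‖f x‖ ≤ M) (hz : M < ‖z‖) :
    SO t fun x => (f x - z)⁻¹ := by
  have hd : 0 < ‖z‖ - M := sub_pos.2 hz
  have hlow : ∀ w : ℂ, ‖w‖ ≤ M → ‖z‖ - M ≤ ‖w - z‖ := fun w hw => by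
    rw [norm_sub_rev]; linarith [norm_sub_norm_le z w]
  have hne : ∀ w : ℂ, ‖w‖ ≤ M → w - z ≠ 0 := fun w hw h => by
    linarith [hlow w hw, h ▸ norm_zero (E := ℂ)]
  have hoff : ∀ x, some x ≠ t → ‖f x‖ ≤ M := fun x hx => hf.norm_le_of_ae hM hx
  have hbound : ∀ x, some x ≠ t → ‖(f x - z)⁻¹‖ ≤ (‖z‖ - M)⁻¹ := fun x hx => by
    rw [norm_inv]; exact inv_anti₀ hd (hlow _ (hoff x hx))
  have H : ∀ s u, some s ≠ t → some u ≠ t → ‖(f s - z)⁻¹ - (f u - z)⁻¹‖ ≤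
      ((‖z‖ - M) * (‖z‖ - M))⁻¹ * (‖f s - f u‖ + ‖f s - f u‖) := fun s u hs hu => by
    refine (norm_inv_sub_inv_le hd (hlow _ (hoff s hs)) (hlow _ (hoff u hu))).trans ?_
    rw [sub_sub_sub_cancel_right]
    exact mul_le_mul_of_nonneg_left (by linarith [norm_nonneg (f s - f u)]) (by positivity)
  cases t with
  | some lam =>
    obtain ⟨-, hfc, ⟨L, hL⟩, hfo⟩ := hf
    have hLM : ‖L‖ ≤ M := le_of_tendsto hL.norm
      (mem_of_superset isCompact_singleton.compl_mem_cocompact fun x hx =>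
        hoff x ((Option.some_injective _).ne hx))
    refine ⟨⟨max (‖z‖ - M)⁻¹ ‖(f lam - z)⁻¹‖, fun x => ?_⟩,
      (hfc.sub continuousOn_const).inv₀ fun x hx =>
        hne _ (hoff x ((Option.some_injective _).ne hx)),
      ⟨_, (hL.sub_const z).inv₀ (hne L hLM)⟩,
      hfo.of_norm_sub_le hfo (by positivity) fun s u hs hu =>
        H s u ((Option.some_injective _).ne hs) ((Option.some_injective _).ne hu)⟩
    by_cases hx : x = lam
    · exact hx ▸ le_max_right _ _
    · exact (hbound x ((Option.some_injective _).ne hx)).trans (le_max_left _ _)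
  | none =>
    obtain ⟨-, hfc, hfo⟩ := hf
    exact ⟨⟨_, fun x => hbound x (Option.some_ne_none x)⟩,
      (hfc.sub continuous_const).inv₀ fun x => hne _ (hoff x (Option.some_ne_none x)),
      hfo.of_norm_sub_le hfo (by positivity) fun s u =>
        H s u (Option.some_ne_none s) (Option.some_ne_none u)⟩

end SO

def soAlg (t : Option ℝ) : Subalgebra ℂ (ℝ → ℂ) where
  carrier := {f | SO t f}
  mul_mem' := SO.mul
  add_mem' := SO.add
  algebraMap_mem' := SO.const t

def nhdsDot : Option ℝ → Filter ℝ
  | some lam => 𝓝 lam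
  | none => cocompact ℝ

/-- Elements of `SO^◇` are a.e.-classes, so nearness to `t` is measured up to null sets. -/
def aeNhdsDot (t : Option ℝ) : Filter ℝ := nhdsDot t ⊓ ae volume

lemma SO.exists_tendsto_nhdsDot {s t : Option ℝ} {f : ℝ → ℂ} (hf : SO s f) (hst : s ≠ t) :
    ∃ L, Tendsto f (nhdsDot t) (𝓝 L) := by
  cases t with
  | some lam => exact ⟨f lam, hf.continuousAt hst.symm⟩
  | none =>
    cases s with
    | some mu => exact hf.2.2.1
    | none => exact absurd rfl hst

lemma exists_continuous_norm_le_one_eqOn {s u : Set ℝ} (hs : IsClosed s) (hu : IsClosed u)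
    (hsu : Disjoint s u) :
    ∃ h : ℝ → ℂ, Continuous h ∧ (∀ x, ‖h x‖ ≤ 1) ∧ EqOn h 0 s ∧ EqOn h 1 u := by
  obtain ⟨F, hF0, hF1, hF⟩ := exists_continuous_zero_one_of_isClosed hs hu hsu
  refine ⟨fun x => (F x : ℂ), by fun_prop, fun x => ?_, fun x hx => ?_, fun x hx => ?_⟩
  · rw [Complex.norm_real, Real.norm_eq_abs, abs_le]
    exact ⟨by linarith [(hF x).1], (hF x).2⟩
  · simp [hF0 hx]
  · simp [hF1 hx]

lemma exists_cutoff {t : Option ℝ} {U : Set ℝ} (hU : U ∈ nhdsDot t) :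
    ∃ h : ℝ → ℂ, CRdot h ∧ (∀ x, ‖h x‖ ≤ 1) ∧ Tendsto h (nhdsDot t) (𝓝 1) ∧
      ∀ x ∉ U, h x = 0 := by
  suffices ∃ s u : Set ℝ, IsClosed s ∧ IsClosed u ∧ Disjoint s u ∧ Uᶜ ⊆ s ∧
      u ∈ nhdsDot t ∧ (s ∈ cocompact ℝ ∨ u ∈ cocompact ℝ) by
    obtain ⟨s, u, hs, hu, hsu, hUs, hut, hcc⟩ := this
    obtain ⟨h, hc, h1, h0s, h1u⟩ := exists_continuous_norm_le_one_eqOn hs hu hsu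
    have lim : ∀ {l : Filter ℝ} {v : Set ℝ} {c : ℂ}, v ∈ l → EqOn h (fun _ => c) v →
        Tendsto h l (𝓝 c) := fun hv hc =>
      tendsto_const_nhds.congr' (eventuallyEq_of_mem hv fun x hx => (hc hx).symm)
    refine ⟨h, ⟨hc, ?_⟩, h1, lim hut h1u, fun x hx => h0s (hUs hx)⟩
    rcases hcc with hs' | hu'
    exacts [⟨0, lim hs' h0s⟩, ⟨1, lim hu' h1u⟩]
  cases t with
  | some lam =>
    obtain ⟨δ, hδ, hball⟩ := Metric.mem_nhds_iff.1 hU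
    refine ⟨(Metric.ball lam δ)ᶜ, Metric.closedBall lam (δ / 2), Metric.isOpen_ball.isClosed_compl,
      Metric.isClosed_closedBall, disjoint_compl_left_iff_subset.2
        (Metric.closedBall_subset_ball (by linarith)), compl_subset_compl.2 hball,
      Metric.closedBall_mem_nhds lam (by positivity), Or.inl ?_⟩
    exact mem_of_superset (isCompact_closedBall lam δ).compl_mem_cocompact
      (compl_subset_compl.2 Metric.ball_subset_closedBall)
  | none =>
    obtain ⟨R, hR⟩ := Metric.closedBall_compl_subset_of_mem_cocompact hU 0
    have hcc : (Metric.ball (0 : ℝ) (R + 1))ᶜ ∈ cocompact ℝ :=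
      mem_of_superset (isCompact_closedBall 0 (R + 1)).compl_mem_cocompact
        (compl_subset_compl.2 Metric.ball_subset_closedBall)
    exact ⟨Metric.closedBall 0 R, (Metric.ball 0 (R + 1))ᶜ, Metric.isClosed_closedBall,
      Metric.isOpen_ball.isClosed_compl, disjoint_compl_right_iff_subset.2
        (Metric.closedBall_subset_ball (by linarith)), compl_subset_comm.1 hR, hcc, Or.inr hcc⟩

section ApproxFilter

variable {α : Type*} {S T : Set (α → ℂ)} {l l' : Filter α} {f g : α → ℂ}

/-- `f` lies in the closure of `S` for the seminorm "supremum along `l`" iff this filter of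
approximants is nontrivial. -/
def approxFilter (S : Set (α → ℂ)) (l : Filter α) (f : α → ℂ) : Filter (α → ℂ) :=
  ⨅ ε > 0, 𝓟 {a | a ∈ S ∧ ∀ᶠ x in l, ‖f x - a x‖ ≤ ε}

lemma hasBasis_approxFilter : (approxFilter S l f).HasBasis (fun ε : ℝ => 0 < ε)
    fun ε => {a | a ∈ S ∧ ∀ᶠ x in l, ‖f x - a x‖ ≤ ε} := by
  refine hasBasis_biInf_principal' (fun ε hε δ hδ => ⟨min ε δ, lt_min hε hδ, ?_, ?_⟩) ⟨1, one_pos⟩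
  all_goals exact fun a ha => ⟨ha.1, ha.2.mono fun x hx => hx.trans (by simp)⟩

lemma approxFilter_neBot_iff :
    (approxFilter S l f).NeBot ↔ ∀ ε > 0, ∃ a ∈ S, ∀ᶠ x in l, ‖f x - a x‖ ≤ ε := by
  simp [hasBasis_approxFilter.neBot_iff, Set.Nonempty]

lemma eventually_mem_approxFilter : ∀ᶠ a in approxFilter S l f, a ∈ S :=
  mem_of_superset (hasBasis_approxFilter.mem_of_mem one_pos) fun _ ha => ha.1

lemma approxFilter_neBot_of_mem (hf : f ∈ S) : (approxFilter S l f).NeBot :=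
  approxFilter_neBot_iff.2 fun _ hε => ⟨f, hf, .of_forall fun x => by simpa using hε.le⟩

lemma approxFilter_neBot_of_tendsto {L : ℂ} (hf : Tendsto f l (𝓝 L)) (hL : (fun _ => L) ∈ S) :
    (approxFilter S l f).NeBot :=
  approxFilter_neBot_iff.2 fun ε hε => ⟨_, hL, (Metric.tendsto_nhds.1 hf ε hε).mono
    fun x hx => by rw [← dist_eq_norm]; exact hx.le⟩

lemma approxFilter_mono (hl : l' ≤ l) : approxFilter S l f ≤ approxFilter S l' f :=
  hasBasis_approxFilter.ge_iff.2 fun _ hε => mem_of_superset (hasBasis_approxFilter.mem_of_mem hε)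
    fun _ ha => ⟨ha.1, ha.2.filter_mono hl⟩

lemma approxFilter_congr (h : f =ᶠ[l] g) : approxFilter S l f = approxFilter S l g := by
  have : ∀ ε : ℝ, {a | a ∈ S ∧ ∀ᶠ x in l, ‖f x - a x‖ ≤ ε} =
      {a | a ∈ S ∧ ∀ᶠ x in l, ‖g x - a x‖ ≤ ε} := fun ε => by
    ext a
    exact and_congr_right fun _ => eventually_congr (h.mono fun x hx => by rw [hx])
  simp only [approxFilter, this]

lemma approxFilter_neBot_trans (hf : (approxFilter T l f).NeBot)
    (hT : ∀ a ∈ T, (approxFilter S l a).NeBot) : (approxFilter S l f).NeBot := by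
  refine approxFilter_neBot_iff.2 fun ε hε => ?_
  obtain ⟨a, ha, hfa⟩ := approxFilter_neBot_iff.1 hf (ε / 2) (by positivity)
  obtain ⟨b, hb, hab⟩ := approxFilter_neBot_iff.1 (hT a ha) (ε / 2) (by positivity)
  refine ⟨b, hb, ?_⟩
  filter_upwards [hfa, hab] with x h₁ h₂
  linarith [norm_sub_le_norm_sub_add_norm_sub (f x) (a x) (b x)]

lemma tendsto_add_approxFilter {S : Subalgebra ℂ (α → ℂ)} :
    Tendsto (fun p : (α → ℂ) × (α → ℂ) => fun x => p.1 x + p.2 x)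
      (approxFilter S l f ×ˢ approxFilter S l g) (approxFilter S l fun x => f x + g x) := by
  refine hasBasis_approxFilter.tendsto_right_iff.2 fun ε hε => ?_
  filter_upwards [prod_mem_prod (hasBasis_approxFilter.mem_of_mem (half_pos hε))
    (hasBasis_approxFilter.mem_of_mem (half_pos hε))] with ⟨a, b⟩ ⟨⟨ha, hfa⟩, ⟨hb, hgb⟩⟩
  refine ⟨add_mem ha hb, ?_⟩
  filter_upwards [hfa, hgb] with x h₁ h₂
  rw [add_sub_add_comm]
  linarith [norm_add_le (f x - a x) (g x - b x)]

lemma tendsto_mul_approxFilter {S : Subalgebra ℂ (α → ℂ)} {M N : ℝ}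
    (hf : ∀ᶠ x in l, ‖f x‖ ≤ M) (hg : ∀ᶠ x in l, ‖g x‖ ≤ N) :
    Tendsto (fun p : (α → ℂ) × (α → ℂ) => fun x => p.1 x * p.2 x)
      (approxFilter S l f ×ˢ approxFilter S l g) (approxFilter S l fun x => f x * g x) := by
  refine hasBasis_approxFilter.tendsto_right_iff.2 fun ε hε => ?_
  set C := |M| + |N| + 1
  have hC : 0 < C := by positivity
  set δ := min 1 (ε / C)
  have hδ : 0 < δ := lt_min one_pos (by positivity)
  have hCδ : C * δ ≤ ε := (mul_le_mul_of_nonneg_left (min_le_right _ _) hC.le).trans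
    (mul_div_cancel₀ ε hC.ne').le
  filter_upwards [prod_mem_prod (hasBasis_approxFilter.mem_of_mem hδ)
    (hasBasis_approxFilter.mem_of_mem hδ)] with ⟨a, b⟩ ⟨⟨ha, hfa⟩, ⟨hb, hgb⟩⟩
  refine ⟨mul_mem ha hb, ?_⟩
  filter_upwards [hfa, hgb, hf, hg] with x h₁ h₂ h₃ h₄
  have hb : ‖b x‖ ≤ |N| + 1 := by
    linarith [norm_le_norm_add_norm_sub' (b x) (g x), norm_sub_rev (g x) (b x), le_abs_self N,
      min_le_left 1 (ε / C)]
  calc ‖f x * g x - a x * b x‖ ≤ ‖f x‖ * ‖g x - b x‖ + ‖f x - a x‖ * ‖b x‖ :=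
        norm_mul_sub_mul_le _ _ _ _
    _ ≤ |M| * δ + δ * (|N| + 1) := add_le_add
        (mul_le_mul (h₃.trans (le_abs_self M)) h₂ (norm_nonneg _) (abs_nonneg M))
        (mul_le_mul h₁ hb (norm_nonneg _) hδ.le)
    _ = C * δ := by ring
    _ ≤ ε := hCδ

lemma tendsto_conj_approxFilter (hS : ∀ a ∈ S, (fun x => starRingEnd ℂ (a x)) ∈ S) :
    Tendsto (fun a x => starRingEnd ℂ (a x)) (approxFilter S l f)
      (approxFilter S l fun x => starRingEnd ℂ (f x)) := by
  refine hasBasis_approxFilter.tendsto_right_iff.2 fun ε hε => ?_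
  filter_upwards [hasBasis_approxFilter.mem_of_mem hε] with a ⟨ha, hfa⟩
  exact ⟨hS a ha, hfa.mono fun x hx => by rwa [← map_sub, Complex.norm_conj]⟩

end ApproxFilter

def LipschitzAlong {α : Type*} (φ : (α → ℂ) → ℂ) (S : Set (α → ℂ)) (l : Filter α) : Prop :=
  ∀ a ∈ S, ∀ b ∈ S, ∀ ε > 0, (∀ᶠ x in l, ‖a x - b x‖ ≤ ε) → ‖φ a - φ b‖ ≤ ε

lemma LipschitzAlong.tendsto_approxFilter {α : Type*} {φ : (α → ℂ) → ℂ} {S T : Set (α → ℂ)}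
    {l : Filter α} {f : α → ℂ} (hφ : LipschitzAlong φ T l) (hST : S ⊆ T) (hf : f ∈ T) :
    Tendsto φ (approxFilter S l f) (𝓝 (φ f)) :=
  Metric.tendsto_nhds.2 fun ε hε => mem_of_superset
    (hasBasis_approxFilter.mem_of_mem (half_pos hε)) fun a ⟨ha, hfa⟩ => by
      rw [Set.mem_ofPred_eq, dist_comm, dist_eq_norm]
      exact (hφ f hf a (hST ha) _ (half_pos hε) hfa).trans_lt (half_lt_self hε)

lemma LipschitzAlong.cauchy_map_approxFilter {α : Type*} {φ : (α → ℂ) → ℂ} {S : Set (α → ℂ)}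
    {l : Filter α} {f : α → ℂ} (hφ : LipschitzAlong φ S l) [(approxFilter S l f).NeBot] :
    Cauchy (map φ (approxFilter S l f)) := by
  refine Metric.cauchy_iff.2 ⟨inferInstance, fun ε hε => ⟨_, image_mem_map
    (hasBasis_approxFilter.mem_of_mem (by positivity : 0 < ε / 3)), ?_⟩⟩
  rintro _ ⟨a, ⟨ha, hfa⟩, rfl⟩ _ ⟨b, ⟨hb, hfb⟩, rfl⟩
  rw [dist_eq_norm]
  refine (hφ a ha b hb (2 * ε / 3) (by positivity) ?_).trans_lt (by linarith)
  filter_upwards [hfa, hfb] with x h₁ h₂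
  linarith [norm_sub_le_norm_sub_add_norm_sub (a x) (f x) (b x), norm_sub_rev (a x) (f x)]

lemma Subalgebra.const_mem {α : Type*} (S : Subalgebra ℂ (α → ℂ)) (c : ℂ) : (fun _ => c) ∈ S :=
  algebraMap_mem S c

namespace CharOn

variable {S : Subalgebra ℂ (ℝ → ℂ)} (χ : CharOn S)

lemma apply_const (c : ℂ) : χ.φ (fun _ => c) = c := by
  simpa [χ.map_one] using χ.map_smul c (fun _ => 1) (one_mem S)

lemma apply_sub {a b : ℝ → ℂ} (ha : a ∈ S) (hb : b ∈ S) :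
    χ.φ (fun x => a x - b x) = χ.φ a - χ.φ b := by
  have h := χ.map_add a ha (fun x => -1 * b x) (S.smul_mem hb (-1))
  rw [χ.map_smul _ _ hb] at h
  simpa [← sub_eq_add_neg] using h

/-- `f - χ f` lies in the kernel of `χ`, so it cannot be invertible in `S`. -/
lemma norm_apply_le {f : ℝ → ℂ} {M : ℝ} (hf : f ∈ S) (hM : ∀ᵐ x, ‖f x‖ ≤ M)
    (hinv : ∀ z : ℂ, M < ‖z‖ → (fun x => (f x - z)⁻¹) ∈ S) : ‖χ.φ f‖ ≤ M := by
  by_contra! hz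
  have hsub : (fun x => f x - χ.φ f) ∈ S := sub_mem hf (S.const_mem (χ.φ f))
  have hunit : (fun x => (f x - χ.φ f) * (f x - χ.φ f)⁻¹) =ᵐ[volume] fun _ => 1 := by
    filter_upwards [hM] with x hx
    exact mul_inv_cancel₀ (sub_ne_zero.2 fun h => by rw [h] at hx; linarith)
  have h := χ.map_ae (fun x => (f x - χ.φ f) * (f x - χ.φ f)⁻¹) (fun _ => 1)
    (mul_mem hsub (hinv _ hz)) (one_mem S) hunit
  rw [χ.map_mul _ hsub _ (hinv _ hz), χ.apply_sub hf (S.const_mem _)] at h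
  simp [χ.apply_const] at h

lemma _root_.InFiber.apply_eq {χ : CharOn S} {t : Option ℝ} (hχ : InFiber S χ t) {h : ℝ → ℂ}
    (hS : h ∈ S) (hh : CRdot h) {L : ℂ} (hL : Tendsto h (nhdsDot t) (𝓝 L)) : χ.φ h = L := by
  cases t with
  | some lam => exact (hχ h hS hh).trans (tendsto_nhds_unique (hh.1.tendsto lam) hL)
  | none => exact hχ h hS hh L hL

/-- Multiplying by a cutoff `h ∈ C(Ṙ)` with `h(t) = 1` does not change `χ`, and `χ` is contractive
for the essential supremum. -/
theorem lipschitzAlong {t : Option ℝ} (hχ : InFiber S χ t) (hCR : ∀ h, CRdot h → h ∈ S)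
    (hinv : ∀ f ∈ S, ∀ (M : ℝ) (z : ℂ), (∀ᵐ x, ‖f x‖ ≤ M) → M < ‖z‖ →
      (fun x => (f x - z)⁻¹) ∈ S) :
    LipschitzAlong χ.φ S (aeNhdsDot t) := by
  intro a ha b hb ε hε hab
  obtain ⟨U, hU, V, hV, hUV⟩ := mem_inf_iff_superset.1 hab
  obtain ⟨h, hCRh, h1, hlim, h0⟩ := exists_cutoff hU
  have hab : (fun x => a x - b x) ∈ S := sub_mem ha hb
  have habh : (fun x => (a x - b x) * h x) ∈ S := mul_mem hab (hCR h hCRh)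
  have hbound : ∀ᵐ x, ‖(a x - b x) * h x‖ ≤ ε := by
    filter_upwards [hV] with x hxV
    by_cases hxU : x ∈ U
    · rw [norm_mul]
      exact (mul_le_mul (hUV ⟨hxU, hxV⟩) (h1 x) (norm_nonneg _) hε.le).trans_eq (mul_one ε)
    · simpa [h0 x hxU] using hε.le
  calc ‖χ.φ a - χ.φ b‖ = ‖χ.φ fun x => (a x - b x) * h x‖ := by
        rw [χ.map_mul _ hab _ (hCR h hCRh), hχ.apply_eq (hCR h hCRh) hCRh hlim, mul_one,
          χ.apply_sub ha hb]
    _ ≤ ε := χ.norm_apply_le habh hbound fun z hz => hinv _ habh ε z hbound hz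

variable (η : CharOn S) {l : Filter ℝ}

def extend (l : Filter ℝ) (f : ℝ → ℂ) : ℂ := limUnder (approxFilter S l f) η.φ

variable {η}

lemma tendsto_extend (hη : LipschitzAlong η.φ S l) {f : ℝ → ℂ} [(approxFilter S l f).NeBot] :
    Tendsto η.φ (approxFilter S l f) (𝓝 (η.extend l f)) :=
  tendsto_nhds_limUnder (CompleteSpace.complete hη.cauchy_map_approxFilter)

lemma extend_eq (hη : LipschitzAlong η.φ S l) {a : ℝ → ℂ} (ha : a ∈ S) : η.extend l a = η.φ a :=
  have := approxFilter_neBot_of_mem (l := l) ha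
  tendsto_nhds_unique (tendsto_extend hη) (hη.tendsto_approxFilter subset_rfl ha)

lemma extend_congr {f g : ℝ → ℂ} (h : f =ᶠ[l] g) : η.extend l f = η.extend l g := by
  rw [extend, extend, approxFilter_congr h]

lemma extend_add (hη : LipschitzAlong η.φ S l) {f g : ℝ → ℂ} [(approxFilter S l f).NeBot]
    [(approxFilter S l g).NeBot] :
    η.extend l (fun x => f x + g x) = η.extend l f + η.extend l g := by
  have hadd := tendsto_add_approxFilter (S := S) (l := l) (f := f) (g := g)
  have := hadd.neBot
  refine tendsto_nhds_unique (((tendsto_extend hη).comp hadd).congr' ?_)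
    (((tendsto_extend hη).comp tendsto_fst).add ((tendsto_extend hη).comp tendsto_snd))
  filter_upwards [prod_mem_prod eventually_mem_approxFilter eventually_mem_approxFilter]
    with p ⟨h₁, h₂⟩ using η.map_add _ h₁ _ h₂

lemma extend_mul (hη : LipschitzAlong η.φ S l) {f g : ℝ → ℂ} {M N : ℝ}
    (hf : ∀ᶠ x in l, ‖f x‖ ≤ M) (hg : ∀ᶠ x in l, ‖g x‖ ≤ N) [(approxFilter S l f).NeBot]
    [(approxFilter S l g).NeBot] :
    η.extend l (fun x => f x * g x) = η.extend l f * η.extend l g := by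
  have hmul := tendsto_mul_approxFilter (S := S) hf hg
  have := hmul.neBot
  refine tendsto_nhds_unique (((tendsto_extend hη).comp hmul).congr' ?_)
    (((tendsto_extend hη).comp tendsto_fst).mul ((tendsto_extend hη).comp tendsto_snd))
  filter_upwards [prod_mem_prod eventually_mem_approxFilter eventually_mem_approxFilter]
    with p ⟨h₁, h₂⟩ using η.map_mul _ h₁ _ h₂

lemma eq_extend (hη : LipschitzAlong η.φ S l) {T : Set (ℝ → ℂ)} {ψ : (ℝ → ℂ) → ℂ}
    (hψ : LipschitzAlong ψ T l) (hST : (S : Set (ℝ → ℂ)) ⊆ T) (hψη : ∀ a ∈ S, ψ a = η.φ a)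
    {f : ℝ → ℂ} (hf : f ∈ T) [(approxFilter S l f).NeBot] : ψ f = η.extend l f :=
  tendsto_nhds_unique ((hψ.tendsto_approxFilter hST hf).congr'
    (eventually_mem_approxFilter.mono hψη)) (tendsto_extend hη)

def extendChar (hη : LipschitzAlong η.φ S l) (hl : l ≤ ae volume) (T : Subalgebra ℂ (ℝ → ℂ))
    (hT : ∀ f ∈ T, (approxFilter S l f).NeBot) (hbdd : ∀ f ∈ T, ∃ M, ∀ᵐ x, ‖f x‖ ≤ M) :
    CharOn T where
  φ := η.extend l
  map_ae _ _ _ _ h := extend_congr (h.filter_mono hl)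
  map_add f hf g hg := by
    have := hT f hf; have := hT g hg
    exact extend_add hη
  map_mul f hf g hg := by
    have := hT f hf; have := hT g hg
    obtain ⟨M, hM⟩ := hbdd f hf
    obtain ⟨N, hN⟩ := hbdd g hg
    exact extend_mul hη (hM.filter_mono hl) (hN.filter_mono hl)
  map_smul c f hf := by
    have := hT f hf; have := approxFilter_neBot_of_mem (l := l) (S.const_mem c)
    obtain ⟨M, hM⟩ := hbdd f hf
    rw [extend_mul (f := fun _ => c) hη (.of_forall fun _ => le_rfl) (hM.filter_mono hl),
      extend_eq hη (S.const_mem c), η.apply_const]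
  map_one := (extend_eq hη (one_mem S)).trans η.map_one

end CharOn

lemma SOgen.bdd {f : ℝ → ℂ} (hf : SOgen f) : Bdd f := by
  induction hf with
  | base t f h => exact h.bdd
  | add _ _ ihf ihg => exact ihf.add ihg
  | mul _ _ ihf ihg => exact ihf.mul ihg
  | smul c _ ihf => exact Bdd.mul ⟨‖c‖, fun _ => le_rfl⟩ ihf
  | star _ ihf => obtain ⟨M, hM⟩ := ihf; exact ⟨M, fun x => by simpa using hM x⟩

def soGenAlg : Subalgebra ℂ (ℝ → ℂ) where
  carrier := {f | SOgen f}
  mul_mem' := SOgen.mul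
  add_mem' := SOgen.add
  algebraMap_mem' c := SOgen.base none _ (SO.const none c)

/-- The generators from `SO_s`, `s ≠ t`, are continuous at `t`. -/
lemma SOgen.approxFilter_neBot {f : ℝ → ℂ} (hf : SOgen f) (t : Option ℝ) :
    (approxFilter (soAlg t) (aeNhdsDot t) f).NeBot := by
  induction hf with
  | base s f h =>
    by_cases hst : s = t
    · exact approxFilter_neBot_of_mem (hst ▸ h : SO t f)
    · obtain ⟨L, hL⟩ := h.exists_tendsto_nhdsDot hst
      exact approxFilter_neBot_of_tendsto (hL.mono_left inf_le_left) ((soAlg t).const_mem L)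
  | add _ _ ihf ihg => exact tendsto_add_approxFilter.neBot
  | @mul f g hf hg ihf ihg =>
    obtain ⟨M, hM⟩ := hf.bdd
    obtain ⟨N, hN⟩ := hg.bdd
    exact (tendsto_mul_approxFilter (.of_forall hM) (.of_forall hN)).neBot
  | @smul c f hf ihf =>
    have := approxFilter_neBot_of_mem (l := aeNhdsDot t) ((soAlg t).const_mem c)
    obtain ⟨M, hM⟩ := hf.bdd
    exact (tendsto_mul_approxFilter (f := fun _ => c) (.of_forall fun _ => le_rfl)
      (.of_forall hM)).neBot
  | star _ ihf => exact (tendsto_conj_approxFilter fun _ => SO.conj).neBot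

lemma MeasureTheory.MemLp.exists_ae_norm_le_of_top {α E : Type*} [MeasurableSpace α]
    {μ : Measure α} [NormedAddCommGroup E] {f : α → E} (hf : MemLp f ⊤ μ) :
    ∃ M, ∀ᵐ x ∂μ, ‖f x‖ ≤ M := by
  obtain ⟨C, hC⟩ := eLpNormEssSup_lt_top_iff_isBoundedUnder.1
    (eLpNorm_exponent_top (f := f) ▸ hf.2)
  exact ⟨C, hC.mono fun x hx => NNReal.coe_le_coe.2 hx⟩

lemma sodiamond_iff {f : ℝ → ℂ} :
    SOdiamond f ↔ MemLp f ⊤ volume ∧ (approxFilter soGenAlg (ae volume) f).NeBot := by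
  refine and_congr_right fun _ => ⟨fun h => approxFilter_neBot_iff.2 fun ε hε => ?_,
    fun h ε hε => ?_⟩
  · obtain ⟨g, hg, hfg⟩ := h ε hε
    refine ⟨g, hg, ?_⟩
    filter_upwards [ae_le_eLpNormEssSup (f := fun x => f x - g x) (μ := volume)] with x hx
    rw [← eLpNorm_exponent_top] at hx
    exact (ENNReal.ofReal_le_ofReal_iff hε.le).1 (by rw [ofReal_norm]; exact hx.trans hfg.le)
  · obtain ⟨g, hg, hfg⟩ := approxFilter_neBot_iff.1 h (ε / 2) (by positivity)
    refine ⟨g, hg, ?_⟩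
    rw [eLpNorm_exponent_top]
    exact (eLpNormEssSup_le_of_ae_bound hfg).trans_lt
      ((ENNReal.ofReal_lt_ofReal_iff hε).2 (half_lt_self hε))

lemma SOdiamond.exists_ae_norm_le {f : ℝ → ℂ} (hf : SOdiamond f) : ∃ M, ∀ᵐ x, ‖f x‖ ≤ M :=
  hf.1.exists_ae_norm_le_of_top

lemma SO.sodiamond {t : Option ℝ} {f : ℝ → ℂ} (hf : SO t f) : SOdiamond f :=
  let ⟨M, hM⟩ := hf.bdd
  sodiamond_iff.2 ⟨memLp_top_of_bound hf.aestronglyMeasurable M (.of_forall hM),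
    approxFilter_neBot_of_mem (SOgen.base t f hf)⟩

def soDiamondAlg : Subalgebra ℂ (ℝ → ℂ) where
  carrier := {f | SOdiamond f}
  mul_mem' {f g} hf hg := by
    rw [Set.mem_ofPred_eq, sodiamond_iff] at *
    obtain ⟨M, hM⟩ := hf.1.exists_ae_norm_le_of_top
    obtain ⟨N, hN⟩ := hg.1.exists_ae_norm_le_of_top
    have := hf.2; have := hg.2
    exact ⟨hg.1.mul hf.1, (tendsto_mul_approxFilter hM hN).neBot⟩
  add_mem' {f g} hf hg := by
    rw [Set.mem_ofPred_eq, sodiamond_iff] at *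
    have := hf.2; have := hg.2
    exact ⟨hf.1.add hg.1, tendsto_add_approxFilter.neBot⟩
  algebraMap_mem' c := (SO.const none c).sodiamond

lemma SOdiamond.of_approxFilter {f : ℝ → ℂ} (hf : MemLp f ⊤ volume)
    (h : (approxFilter soDiamondAlg (ae volume) f).NeBot) : SOdiamond f :=
  sodiamond_iff.2 ⟨hf, approxFilter_neBot_trans h fun _ ha => (sodiamond_iff.1 ha).2⟩

lemma inv_sub_add_sum_div_pow {w ζ : ℂ} (hw : w ≠ ζ) (hζ : ζ ≠ 0) (n : ℕ) :
    (w - ζ)⁻¹ + ∑ k ∈ Finset.range n, w ^ k / ζ ^ (k + 1) = (w / ζ) ^ n / (w - ζ) := by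
  have hwζ : w - ζ ≠ 0 := sub_ne_zero.2 hw
  have hsum : ∑ k ∈ Finset.range n, w ^ k / ζ ^ (k + 1) =
      (∑ k ∈ Finset.range n, (w / ζ) ^ k) / ζ := by
    rw [Finset.sum_div]
    exact Finset.sum_congr rfl fun k _ => by rw [div_pow, pow_succ]; field_simp
  have hgeom := geom_sum_mul (w / ζ) n
  rw [hsum]
  field_simp
  rw [div_sub_one hζ] at hgeom
  field_simp at hgeom
  linear_combination hgeom

/-- `(f - ζ)⁻¹` is the uniform limit of the partial sums of its geometric series in `f / ζ`. -/
lemma SOdiamond.inv_sub {f : ℝ → ℂ} {M : ℝ} {ζ : ℂ} (hf : SOdiamond f)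
    (hM : ∀ᵐ x, ‖f x‖ ≤ M) (hζ : M < ‖ζ‖) : SOdiamond fun x => (f x - ζ)⁻¹ := by
  obtain ⟨x₀, hx₀⟩ := hM.exists
  have hM0 : 0 ≤ M := (norm_nonneg _).trans hx₀
  have hd : 0 < ‖ζ‖ - M := sub_pos.2 hζ
  have hζ0 : ζ ≠ 0 := norm_pos_iff.1 (hM0.trans_lt hζ)
  have hlow : ∀ w : ℂ, ‖w‖ ≤ M → ‖ζ‖ - M ≤ ‖w - ζ‖ := fun w hw => by
    rw [norm_sub_rev]; linarith [norm_sub_norm_le ζ w]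
  have hne : ∀ w : ℂ, ‖w‖ ≤ M → w ≠ ζ := fun w hw h => by rw [h] at hw; linarith
  refine .of_approxFilter (memLp_top_of_bound
    ((hf.1.1.aemeasurable.sub_const ζ).inv.aestronglyMeasurable) (‖ζ‖ - M)⁻¹ ?_) ?_
  · filter_upwards [hM] with x hx
    rw [norm_inv]; exact inv_anti₀ hd (hlow _ hx)
  refine approxFilter_neBot_iff.2 fun ε hε => ?_
  obtain ⟨n, hn⟩ := exists_pow_lt_of_lt_one (by positivity : 0 < ε * (‖ζ‖ - M))
    ((div_lt_one (hM0.trans_lt hζ)).2 hζ)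
  refine ⟨fun x => -∑ k ∈ Finset.range n, f x ^ k / ζ ^ (k + 1), ?_, ?_⟩
  · have : (fun x => -∑ k ∈ Finset.range n, f x ^ k / ζ ^ (k + 1)) =
        -∑ k ∈ Finset.range n, (ζ ^ (k + 1))⁻¹ • f ^ k := by
      ext x; simp [Finset.sum_apply, div_eq_inv_mul]
    rw [this]
    exact neg_mem (sum_mem fun k _ => Subalgebra.smul_mem _ (pow_mem hf _) _)
  filter_upwards [hM] with x hx
  rw [sub_neg_eq_add, inv_sub_add_sum_div_pow (hne _ hx) hζ0, norm_div, norm_pow, norm_div,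
    div_le_iff₀ (hd.trans_le (hlow _ hx))]
  calc (‖f x‖ / ‖ζ‖) ^ n ≤ (M / ‖ζ‖) ^ n := by gcongr
    _ ≤ ε * (‖ζ‖ - M) := hn.le
    _ ≤ ε * ‖f x - ζ‖ := by gcongr; exact hlow _ hx

lemma SOdiamond.approxFilter_neBot {f : ℝ → ℂ} (hf : SOdiamond f) (t : Option ℝ) :
    (approxFilter (soAlg t) (aeNhdsDot t) f).NeBot :=
  approxFilter_neBot_trans ((sodiamond_iff.1 hf).2.mono (approxFilter_mono inf_le_right))
    fun _ hg => SOgen.approxFilter_neBot hg t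

lemma InFiber.of_eqOn {t : Option ℝ} {S T : Set (ℝ → ℂ)} {χ : CharOn S} {ψ : CharOn T}
    (hχ : InFiber S χ t) (hCR : ∀ f, CRdot f → f ∈ S) (hψχ : ∀ f ∈ S, ψ.φ f = χ.φ f) :
    InFiber T ψ t := by
  cases t with
  | some lam => exact fun f _ hf => (hψχ f (hCR f hf)).trans (hχ f (hCR f hf) hf)
  | none => exact fun f _ hf L hL => (hψχ f (hCR f hf)).trans (hχ f (hCR f hf) hf L hL)

/-- For every t ∈ Ṙ, every character in the fiber M_t(SO_t) extends uniquely to a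
character in the fiber M_t(SO^◇); hence M_t(SO_t) = M_t(SO^◇). -/
theorem fibers_SOt_eq_fibers_SOdiamond (t : Option ℝ) (η : CharOn {f | SO t f})
    (hη : InFiber {f | SO t f} η t) :
    ∃ ξ : CharOn {f | SOdiamond f}, InFiber {f | SOdiamond f} ξ t ∧
      (∀ f : ℝ → ℂ, SO t f → ξ.φ f = η.φ f) ∧
      ∀ ξ' : CharOn {f | SOdiamond f}, InFiber {f | SOdiamond f} ξ' t →
        (∀ f : ℝ → ℂ, SO t f → ξ'.φ f = η.φ f) →
        ∀ f : ℝ → ℂ, SOdiamond f → ξ'.φ f = ξ.φ f := by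
  have hηL : LipschitzAlong η.φ (soAlg t) (aeNhdsDot t) :=
    CharOn.lipschitzAlong (S := soAlg t) η hη (fun h hh => hh.so t) fun _ hf _ _ => hf.inv_sub
  have hext : ∀ f, SO t f → CharOn.extend (S := soAlg t) η (aeNhdsDot t) f = η.φ f := fun f hf =>
    CharOn.extend_eq (S := soAlg t) hηL hf
  refine ⟨CharOn.extendChar (S := soAlg t) hηL inf_le_right soDiamondAlg
      (fun f hf => SOdiamond.approxFilter_neBot hf t) fun f hf => SOdiamond.exists_ae_norm_le hf,
    hη.of_eqOn (fun f hf => hf.so t) hext, hext, fun ξ' hξ' hξ'η f hf => ?_⟩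
  have := SOdiamond.approxFilter_neBot hf t
  exact CharOn.eq_extend (S := soAlg t) hηL
    (CharOn.lipschitzAlong (S := soDiamondAlg) ξ' hξ' (fun h hh => (hh.so t).sodiamond)
      fun _ hf _ _ => hf.inv_sub) (fun _ => SO.sodiamond) hξ'η hf
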